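/- Let R be a weakly semihereditary ring: for all positive integers p, q, r and all matrices A of size p×q and B of size q×r over R with AB = 0, there exists an idempotent q×q matrix E (E² = E) with AE = A and EB = 0. Then every submodule of every flat right R-module is flat (R has weak global dimension at most 1). -/

import Mathlib

open CategoryTheory CategoryTheory.Limits HomologicalComplex TensorProduct

universe u

/-- The balancing relations inside `M ⊗[ℤ] N` for a right `R`-module `M` and a left
`R`-module `N`. -/
def balanceRel (R : Type u) [Ring R] (M : Type u) [AddCommGroup M] [Module Rᵐᵒᵖ M]
    (N : Type u) [AddCommGroup N] [Module R N] : Submodule ℤ (M ⊗[ℤ] N) :=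
  Submodule.span ℤ {z | ∃ (m : M) (r : R) (n : N),
    z = (MulOpposite.op r • m) ⊗ₜ[ℤ] n - m ⊗ₜ[ℤ] (r • n)}

/-- The tensor product `M ⊗[R] N` of a right `R`-module and a left `R`-module. -/
def RTensor (R : Type u) [Ring R] (M : Type u) [AddCommGroup M] [Module Rᵐᵒᵖ M]
    (N : Type u) [AddCommGroup N] [Module R N] : Type u :=
  (M ⊗[ℤ] N) ⧸ balanceRel R M N

noncomputable instance (R : Type u) [Ring R] (M : Type u) [AddCommGroup M] [Module Rᵐᵒᵖ M]
    (N : Type u) [AddCommGroup N] [Module R N] : AddCommGroup (RTensor R M N) :=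
  inferInstanceAs (AddCommGroup ((M ⊗[ℤ] N) ⧸ balanceRel R M N))

/-- The map `M ⊗[R] N → M ⊗[R] N'` induced by an `R`-linear map `N → N'`. -/
noncomputable def rTensorMap (R : Type u) [Ring R]
    (M : Type u) [AddCommGroup M] [Module Rᵐᵒᵖ M]
    {N N' : Type u} [AddCommGroup N] [Module R N] [AddCommGroup N'] [Module R N']
    (f : N →ₗ[R] N') : RTensor R M N →ₗ[ℤ] RTensor R M N' :=
  Submodule.mapQ (balanceRel R M N) (balanceRel R M N')
    (TensorProduct.map LinearMap.id (f.restrictScalars ℤ)) (by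
      unfold balanceRel
      refine Submodule.span_le.2 ?_
      rintro z ⟨m, r, n, rfl⟩
      rw [SetLike.mem_coe]
      refine Submodule.mem_comap.2 ?_
      refine Submodule.subset_span ⟨m, r, f n, ?_⟩
      erw [map_sub, TensorProduct.map_tmul, TensorProduct.map_tmul]
      simp)

/-- A right `R`-module `M` is flat if tensoring with `M` over `R` preserves injectivity
of maps of left `R`-modules. -/
def IsFlatRight (R : Type u) [Ring R] (M : Type u) [AddCommGroup M] [Module Rᵐᵒᵖ M] : Prop :=
  ∀ (N N' : Type u) [AddCommGroup N] [Module R N] [AddCommGroup N'] [Module R N']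
    (f : N →ₗ[R] N'), Function.Injective f → Function.Injective (rTensorMap R M f)

/-- `R` has weak global dimension at most `1`: every submodule of every flat right
`R`-module is flat. -/
def WeakGlobalDimLE1 (R : Type u) [Ring R] : Prop :=
  ∀ (M : Type u) [AddCommGroup M] [Module Rᵐᵒᵖ M], IsFlatRight R M →
    ∀ N : Submodule Rᵐᵒᵖ M, IsFlatRight R ↥N


/-! Flatness of a right module `P` is equivalent to the equational criterion: every relation
`ν C = 0` between finitely many elements `ν` of `P`, with `C` a matrix over `R`, is trivialised
by a factorisation `ν = μ A` with `A C = 0`. Let `N ⊆ M` with `M` flat and let `ν C = 0` in `N`.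
The criterion in `M` gives `ν = μ A` with `A C = 0`; weak semiheredity then gives `E` with
`A E = A` and `E C = 0`, so `ν = μ A E = ν E`, which trivialises the relation inside `N`. -/

open scoped RightActions

namespace RTensor

variable (R : Type u) [Ring R]
variable {P P' X Y : Type u} [AddCommGroup P] [Module Rᵐᵒᵖ P] [AddCommGroup P'] [Module Rᵐᵒᵖ P']
  [AddCommGroup X] [Module R X] [AddCommGroup Y] [Module R Y]

noncomputable def tmul (m : P) (x : X) : RTensor R P X :=
  Submodule.Quotient.mk (m ⊗ₜ[ℤ] x)

@[simp]
lemma add_tmul (m m' : P) (x : X) : tmul R (m + m') x = tmul R m x + tmul R m' x := by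
  rw [tmul, TensorProduct.add_tmul, Submodule.Quotient.mk_add]; rfl

@[simp]
lemma tmul_add (m : P) (x x' : X) : tmul R m (x + x') = tmul R m x + tmul R m x' := by
  rw [tmul, TensorProduct.tmul_add, Submodule.Quotient.mk_add]; rfl

@[simp]
lemma zero_tmul (x : X) : tmul R (0 : P) x = 0 := by
  rw [tmul, TensorProduct.zero_tmul]; rfl

@[simp]
lemma tmul_zero (m : P) : tmul R m (0 : X) = 0 := by
  rw [tmul, TensorProduct.tmul_zero]; rfl

lemma op_smul_tmul (m : P) (r : R) (x : X) : tmul R (m <• r) x = tmul R m (r • x) :=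
  (Submodule.Quotient.eq _).2 (Submodule.subset_span ⟨m, r, x, rfl⟩)

lemma sum_tmul {ι : Type*} (s : Finset ι) (m : ι → P) (x : X) :
    tmul R (∑ i ∈ s, m i) x = ∑ i ∈ s, tmul R (m i) x :=
  map_sum (AddMonoidHom.mk' (fun m : P => tmul R m x) (fun _ _ => add_tmul R _ _ x)) m s

lemma tmul_sum {ι : Type*} (s : Finset ι) (m : P) (x : ι → X) :
    tmul R m (∑ i ∈ s, x i) = ∑ i ∈ s, tmul R m (x i) :=
  map_sum (AddMonoidHom.mk' (fun x : X => tmul R m x) (fun _ _ => tmul_add R m _ _)) x s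

lemma sum_tmul_rows_eq_zero {ι : Type*} {σ : Type u} [Fintype ι] [Fintype σ] [DecidableEq σ]
    (ν : ι → P) (C : Matrix ι σ R) (hC : ∀ j, ∑ i, ν i <• C i j = 0) :
    ∑ i, tmul R (ν i) (C i) = 0 := by
  calc ∑ i, tmul R (ν i) (C i)
      = ∑ i, ∑ j, tmul R (ν i <• C i j) (Pi.single j 1 : σ → R) := by
        refine Finset.sum_congr rfl fun i _ => ?_
        conv_lhs => rw [pi_eq_sum_univ' (C i), tmul_sum]
        simp only [op_smul_tmul]
    _ = ∑ j, tmul R (∑ i, ν i <• C i j) (Pi.single j 1 : σ → R) := by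
        rw [Finset.sum_comm]
        simp only [sum_tmul]
    _ = 0 := by simp [hC]

lemma exists_eq_sum_tmul (z : RTensor R P X) :
    ∃ (ι : Type u) (_ : Fintype ι) (m : ι → P) (x : ι → X), z = ∑ i, tmul R (m i) (x i) := by
  obtain ⟨u, rfl⟩ := Submodule.Quotient.mk_surjective _ z
  obtain ⟨S, rfl⟩ := TensorProduct.exists_finset u
  refine ⟨S, inferInstance, fun p => p.1.1, fun p => p.1.2, ?_⟩
  rw [Finset.sum_coe_sort S fun p => tmul R p.1 p.2]
  exact map_sum (Submodule.mkQ _) _ S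

lemma rTensorMap_tmul (f : X →ₗ[R] Y) (m : P) (x : X) :
    rTensorMap R P f (tmul R m x) = tmul R m (f x) :=
  rfl

-- `balanceRel` carries the `ℤ`-module structure `AddCommGroup.toIntModule` of `P ⊗[ℤ] X`, which
-- is not reducibly the tensor product's own one: hence `toIntLinearMap` here and `erw` below.
noncomputable def lift {Z : Type*} [AddCommGroup Z] (φ : P →ₗ[ℤ] X →ₗ[ℤ] Z)
    (hφ : ∀ (m : P) (r : R) (x : X), φ (m <• r) x = φ m (r • x)) : RTensor R P X →ₗ[ℤ] Z :=
  (balanceRel R P X).liftQ (TensorProduct.lift φ).toAddMonoidHom.toIntLinearMap <|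
    Submodule.span_le.2 <| by
      rintro _ ⟨m, r, x, rfl⟩
      simp [hφ]

@[simp]
lemma lift_tmul {Z : Type*} [AddCommGroup Z] (φ : P →ₗ[ℤ] X →ₗ[ℤ] Z)
    (hφ : ∀ (m : P) (r : R) (x : X), φ (m <• r) x = φ m (r • x)) (m : P) (x : X) :
    RTensor.lift R φ hφ (tmul R m x) = φ m x :=
  rfl

noncomputable def coord {S : Type u} (b : S) : RTensor R (S →₀ Rᵐᵒᵖ) X →ₗ[ℤ] X :=
  RTensor.lift R
    (LinearMap.mk₂ ℤ (fun f x => (f b).unop • x) (fun _ _ _ => by simp [add_smul])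
      (fun _ _ _ => by simp only [Finsupp.smul_apply, MulOpposite.unop_smul, smul_assoc])
      (fun _ _ _ => smul_add _ _ _) (fun _ _ _ => smul_comm _ _ _))
    (fun f r x => by simp [mul_smul])

lemma coord_tmul {S : Type u} (b : S) (f : S →₀ Rᵐᵒᵖ) (x : X) :
    coord R b (tmul R f x) = (f b).unop • x :=
  lift_tmul R _ _ f x

variable (X) in
noncomputable def lTensorMap (g : P →ₗ[Rᵐᵒᵖ] P') :
    RTensor R P X →ₗ[ℤ] RTensor R P' X :=
  Submodule.mapQ (balanceRel R P X) (balanceRel R P' X)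
    (LinearMap.rTensor X (g.restrictScalars ℤ)) <| Submodule.span_le.2 <| by
      rintro _ ⟨m, r, x, rfl⟩
      refine Submodule.subset_span ⟨g m, r, x, ?_⟩
      erw [map_sub, LinearMap.rTensor_tmul, LinearMap.rTensor_tmul]
      simp

lemma lTensorMap_tmul (g : P →ₗ[Rᵐᵒᵖ] P') (m : P) (x : X) :
    lTensorMap R X g (tmul R m x) = tmul R (g m) x :=
  rfl

lemma exists_rTensor_eq_of_mem_balanceRel {g : P →ₗ[Rᵐᵒᵖ] P'} (hg : Function.Surjective g)
    {w : P' ⊗[ℤ] X} (hw : w ∈ balanceRel R P' X) :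
    ∃ v ∈ balanceRel R P X, LinearMap.rTensor X (g.restrictScalars ℤ) v = w := by
  induction hw using Submodule.span_induction with
  | mem w hw =>
    obtain ⟨m', r, x, rfl⟩ := hw
    obtain ⟨m, rfl⟩ := hg m'
    exact ⟨_, Submodule.subset_span ⟨m, r, x, rfl⟩, by simp⟩
  | zero => exact ⟨0, zero_mem _, map_zero _⟩
  | add _ _ _ _ h₁ h₂ =>
    obtain ⟨v₁, hv₁, rfl⟩ := h₁
    obtain ⟨v₂, hv₂, rfl⟩ := h₂
    exact ⟨v₁ + v₂, add_mem hv₁ hv₂, map_add _ _ _⟩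
  | smul n _ _ h =>
    obtain ⟨v, hv, rfl⟩ := h
    exact ⟨n • v, Submodule.smul_mem _ n hv, map_zsmul _ n v⟩

lemma exists_eq_sum_tmul_of_lTensorMap_eq_zero {g : P →ₗ[Rᵐᵒᵖ] P'}
    (hg : Function.Surjective g) (z : RTensor R P X) (hz : lTensorMap R X g z = 0) :
    ∃ (ι : Type u) (_ : Fintype ι) (k : ι → P) (y : ι → X),
      (∀ j, g (k j) = 0) ∧ z = ∑ j, tmul R (k j) (y j) := by
  obtain ⟨u, rfl⟩ := Submodule.Quotient.mk_surjective _ z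
  obtain ⟨v, hv, hvu⟩ :=
    exists_rTensor_eq_of_mem_balanceRel R hg ((Submodule.Quotient.mk_eq_zero _).1 hz)
  obtain ⟨w, hw⟩ := (rTensor_exact X (g.restrictScalars ℤ).exact_subtype_ker_map hg (u - v)).1 <| by
    rw [map_sub]
    exact sub_eq_zero.2 hvu.symm
  obtain ⟨S, rfl⟩ := TensorProduct.exists_finset w
  refine ⟨S, inferInstance, fun p => p.1.1, fun p => p.1.2, fun p => p.1.1.2, ?_⟩
  rw [Finset.sum_coe_sort S fun p => tmul R (p.1 : P) p.2]
  calc (Submodule.Quotient.mk u : RTensor R P X)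
      = Submodule.Quotient.mk (u - v) := (Submodule.Quotient.eq _).2 (by rwa [sub_sub_cancel])
    _ = _ := by rw [← hw, map_sum]; exact map_sum (Submodule.mkQ _) _ S

def VanishesTrivially {ι : Type u} [Fintype ι] (m : ι → P) (x : ι → X) : Prop :=
  ∃ (σ : Type u) (_ : Fintype σ) (c : Matrix ι σ R) (y : σ → X),
    (∀ i, x i = ∑ j, c i j • y j) ∧ ∀ j, ∑ i, m i <• c i j = 0

-- Present `P` as a quotient of the free module on `ι ⊕ P`, the basis vector at `inl i` going to
-- `m i`. By right exactness, the lift of the vanishing tensor is a sum of `k j ⊗ y j` with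
-- relations `k j`; its coordinates in the free module recover `x` from the `y j`.
theorem exists_vanishesTrivially_of_sum_tmul_eq_zero {ι : Type u} [Fintype ι]
    (m : ι → P) (x : ι → X) (h : ∑ i, tmul R (m i) (x i) = 0) :
    ∃ (κ : Type u) (_ : Fintype κ) (m' : κ → P),
      VanishesTrivially R (Sum.elim m m') (Sum.elim x 0) := by
  classical
  let v : ι ⊕ P → P := Sum.elim m id
  let g := Finsupp.linearCombination Rᵐᵒᵖ v
  have hg : Function.Surjective g := fun p => ⟨Finsupp.single (Sum.inr p) 1, by simp [g, v]⟩
  let z : RTensor R (ι ⊕ P →₀ Rᵐᵒᵖ) X :=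
    ∑ i, tmul R (Finsupp.single (Sum.inl i) (1 : Rᵐᵒᵖ)) (x i)
  have hz : lTensorMap R X g z = 0 := by simpa [z, map_sum, lTensorMap_tmul, g, v] using h
  obtain ⟨σ, _, k, y, hk, hzk⟩ := exists_eq_sum_tmul_of_lTensorMap_eq_zero R hg z hz
  have hcoord (b : ι ⊕ P) :
      ∑ i, (Finsupp.single (Sum.inl i) (1 : Rᵐᵒᵖ) b).unop • x i = ∑ j, (k j b).unop • y j := by
    simpa [z, map_sum, coord_tmul] using congrArg (coord R b) hzk
  let T : Finset P := (Finset.univ.biUnion fun j => (k j).support).toRight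
  let e : ι ⊕ T ↪ ι ⊕ P :=
    ⟨Sum.map id Subtype.val, Sum.map_injective.2 ⟨Function.injective_id, Subtype.val_injective⟩⟩
  refine ⟨T, inferInstance, Subtype.val, σ, inferInstance, fun a j => (k j (e a)).unop, y,
    ?_, fun j => ?_⟩
  · rintro (i | t)
    · simpa [e, Finsupp.single_apply, apply_ite MulOpposite.unop] using hcoord (Sum.inl i)
    · simpa [e] using hcoord (Sum.inr t)
  · have hsupp : (k j).support ⊆ Finset.univ.map e := by
      rintro (i | p) hp
      · exact Finset.mem_map.2 ⟨Sum.inl i, Finset.mem_univ _, rfl⟩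
      · have hpT : p ∈ T := by simpa [T] using ⟨j, Finsupp.mem_support_iff.1 hp⟩
        exact Finset.mem_map.2 ⟨Sum.inr ⟨p, hpT⟩, Finset.mem_univ _, rfl⟩
    calc ∑ a, Sum.elim m Subtype.val a <• (k j (e a)).unop
        = ∑ a, k j (e a) • v (e a) := by
          refine Finset.sum_congr rfl fun a _ => ?_
          rcases a with i | t <;> rfl
      _ = g (k j) := by
          rw [Finsupp.linearCombination_apply, Finsupp.sum_of_support_subset _ hsupp _ (by simp),
            Finset.sum_map]
      _ = 0 := hk j

end RTensor

section MatrixAction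

variable {R : Type*} [Semiring R] {τ ι σ : Type*} [Fintype ι]

theorem sum_smul_sum_smul [Fintype σ] {X : Type*} [AddCommMonoid X] [Module R X]
    (A : Matrix τ ι R) (c : Matrix ι σ R) (y : σ → X) (l : τ) :
    ∑ i, A l i • ∑ j, c i j • y j = ∑ j, (A * c) l j • y j := by
  simp only [Finset.smul_sum, smul_smul, Matrix.mul_apply, Finset.sum_smul]
  exact Finset.sum_comm

theorem sum_op_smul_sum_op_smul [Fintype τ] {P : Type*} [AddCommMonoid P] [Module Rᵐᵒᵖ P]
    (μ : τ → P) (A : Matrix τ ι R) (C : Matrix ι σ R) (j : σ) :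
    ∑ i, (∑ l, μ l <• A l i) <• C i j = ∑ l, μ l <• (A * C) l j := by
  simp only [Finset.smul_sum, op_smul_op_smul, Matrix.mul_apply, Finset.op_sum,
    Finset.sum_smul]
  exact Finset.sum_comm

end MatrixAction

section EquationalCriterion

open RTensor

variable (R : Type u) [Ring R] (P : Type u) [AddCommGroup P] [Module Rᵐᵒᵖ P]

def EquationalCriterion : Prop :=
  ∀ (ι σ : Type u) [Fintype ι] [Fintype σ] (ν : ι → P) (C : Matrix ι σ R),
    (∀ j, ∑ i, ν i <• C i j = 0) →
    ∃ (τ : Type u) (_ : Fintype τ) (μ : τ → P) (A : Matrix τ ι R),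
      (∀ i, ν i = ∑ l, μ l <• A l i) ∧ A * C = 0

variable {R P}

theorem IsFlatRight.equationalCriterion (h : IsFlatRight R P) : EquationalCriterion R P := by
  classical
  intro ι σ _ _ ν C hC
  let X := Submodule.span R (Set.range C)
  have hrow (i : ι) : C i ∈ X := Submodule.subset_span ⟨i, rfl⟩
  have hvanish : ∑ i, tmul R (ν i) (⟨C i, hrow i⟩ : X) = 0 := by
    refine h X (σ → R) X.subtype X.injective_subtype ?_
    rw [map_sum, map_zero]
    exact sum_tmul_rows_eq_zero R ν C hC
  obtain ⟨κ, _, m', σ', _, c, y, hy, hc⟩ :=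
    exists_vanishesTrivially_of_sum_tmul_eq_zero R ν _ hvanish
  -- With `y j = ∑ i, d j i • C i`, `hy` says `[C; 0] = c d C`, so `A := [1; 0] - c d` kills `C`;
  -- `hc` says that `Sum.elim ν m'` kills `c`, so `A` still reproduces `ν`.
  choose d hd using fun j => (Submodule.mem_span_range_iff_exists_fun R).1 (y j).2
  refine ⟨ι ⊕ κ, inferInstance, Sum.elim ν m', Matrix.fromRows 1 0 - c * Matrix.of d,
    fun i => ?_, ?_⟩
  · have hcd : ∑ a, Sum.elim ν m' a <• (c * Matrix.of d) a i = 0 := by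
      simp [← sum_op_smul_sum_op_smul, hc]
    simp [Matrix.sub_apply, sub_smul, Finset.sum_sub_distrib, hcd, Matrix.one_apply,
      apply_ite MulOpposite.op]
  · have hdC : Matrix.of d * C = Matrix.of fun j => (y j : σ → R) := by
      ext j k
      simp [Matrix.mul_apply, ← hd j]
    rw [Matrix.sub_mul, Matrix.fromRows_mul, Matrix.mul_assoc, hdC, sub_eq_zero]
    ext a k
    have := congrFun (congrArg Subtype.val (hy a)) k
    rcases a with i | t <;> simpa [Matrix.mul_apply] using this

theorem isFlatRight_of_equationalCriterion (h : EquationalCriterion R P) : IsFlatRight R P := by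
  intro N N' _ _ _ _ f hf
  rw [injective_iff_map_eq_zero]
  intro z hz
  obtain ⟨ι, _, m, n, rfl⟩ := exists_eq_sum_tmul R z
  have hfz : ∑ i, tmul R (m i) (f (n i)) = 0 := by simpa [map_sum, rTensorMap_tmul] using hz
  obtain ⟨κ, _, m', σ, _, c, y, hy, hc⟩ :=
    exists_vanishesTrivially_of_sum_tmul_eq_zero R m _ hfz
  obtain ⟨τ, _, μ, A, hμ, hAc⟩ := h _ σ (Sum.elim m m') c hc
  let n' : ι ⊕ κ → N := Sum.elim n 0
  have hfn' (a : ι ⊕ κ) : f (n' a) = ∑ j, c a j • y j := by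
    rcases a with i | t
    · exact hy (Sum.inl i)
    · simpa [n'] using hy (Sum.inr t)
  have hAn' (l : τ) : ∑ a, A l a • n' a = 0 := hf <| by
    simp only [map_sum, map_smul, hfn', sum_smul_sum_smul, hAc, Matrix.zero_apply, zero_smul,
      Finset.sum_const_zero, map_zero]
  calc ∑ i, tmul R (m i) (n i) = ∑ a, tmul R (Sum.elim m m' a) (n' a) := by simp [n']
    _ = ∑ a, ∑ l, tmul R (μ l) (A l a • n' a) := by
        refine Finset.sum_congr rfl fun a _ => ?_
        rw [hμ a, RTensor.sum_tmul]
        simp only [op_smul_tmul]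
    _ = 0 := by
        rw [Finset.sum_comm]
        simp [← RTensor.tmul_sum, hAn']

end EquationalCriterion

def IsWeaklySemihereditary (R : Type u) [Ring R] : Prop :=
  ∀ (p q r : ℕ), 0 < p → 0 < q → 0 < r →
    ∀ (A : Matrix (Fin p) (Fin q) R) (B : Matrix (Fin q) (Fin r) R), A * B = 0 →
      ∃ E : Matrix (Fin q) (Fin q) R, E * E = E ∧ A * E = A ∧ E * B = 0

theorem IsWeaklySemihereditary.exists_idempotent {R : Type u} [Ring R]
    (h : IsWeaklySemihereditary R) {τ ι σ : Type*} [Fintype τ] [Fintype ι] [Fintype σ]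
    [DecidableEq ι] (A : Matrix τ ι R) (B : Matrix ι σ R) (hAB : A * B = 0) :
    ∃ E : Matrix ι ι R, E * E = E ∧ A * E = A ∧ E * B = 0 := by
  by_cases hτι : IsEmpty τ ∨ IsEmpty ι
  · refine ⟨0, by simp, ?_, by simp⟩
    rcases hτι with _ | _ <;> exact Subsingleton.elim _ _
  by_cases hσ : IsEmpty σ
  · exact ⟨1, by simp, by simp, Subsingleton.elim _ _⟩
  simp only [not_or, not_isEmpty_iff] at hτι hσ
  obtain ⟨_, _⟩ := hτι
  let eτ := Fintype.equivFin τ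
  let eι := Fintype.equivFin ι
  let eσ := Fintype.equivFin σ
  obtain ⟨E, hEE, hAE, hEB⟩ := h _ _ _ Fintype.card_pos Fintype.card_pos Fintype.card_pos
    (A.submatrix eτ.symm eι.symm) (B.submatrix eι.symm eσ.symm)
    (by simp [Matrix.submatrix_mul_equiv, hAB])
  have hA : A = (A.submatrix eτ.symm eι.symm).submatrix eτ eι := by simp
  have hB : B = (B.submatrix eι.symm eσ.symm).submatrix eι eσ := by simp
  refine ⟨E.submatrix eι eι, ?_, ?_, ?_⟩
  · rw [Matrix.submatrix_mul_equiv, hEE]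
  · conv_lhs => rw [hA]
    rw [Matrix.submatrix_mul_equiv, hAE, ← hA]
  · rw [hB, Matrix.submatrix_mul_equiv, hEB]
    rfl

theorem EquationalCriterion.submodule {R : Type u} [Ring R] (hR : IsWeaklySemihereditary R)
    {M : Type u} [AddCommGroup M] [Module Rᵐᵒᵖ M] (hM : EquationalCriterion R M)
    (N : Submodule Rᵐᵒᵖ M) : EquationalCriterion R N := by
  classical
  intro ι σ _ _ ν C hC
  obtain ⟨τ, _, μ, A, hμ, hAC⟩ := hM ι σ (fun i => ν i) C fun j => by
    simpa using congrArg Subtype.val (hC j)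
  obtain ⟨E, -, hAE, hEC⟩ := hR.exists_idempotent A C hAC
  refine ⟨ι, inferInstance, ν, E, fun i => Subtype.ext ?_, hEC⟩
  calc (ν i : M) = ∑ l, μ l <• (A * E) l i := by rw [hAE, hμ i]
    _ = ∑ i', (∑ l, μ l <• A l i') <• E i' i := (sum_op_smul_sum_op_smul μ A E i).symm
    _ = ((∑ i', ν i' <• E i' i : N) : M) := by simp [hμ]

theorem weakGlobalDim_le_one_of_weaklySemihereditary (R : Type u) [Ring R]
    (hwsh : ∀ (p q r : ℕ), 0 < p → 0 < q → 0 < r →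
      ∀ (A : Matrix (Fin p) (Fin q) R) (B : Matrix (Fin q) (Fin r) R), A * B = 0 →
        ∃ E : Matrix (Fin q) (Fin q) R, E * E = E ∧ A * E = A ∧ E * B = 0) :
    WeakGlobalDimLE1 R := fun _ _ _ hM N =>
  isFlatRight_of_equationalCriterion (hM.equationalCriterion.submodule hwsh N)
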